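/- arXiv:2601.22897 — 5 statements merged into one kernel-verified Lean document; each statement's English description precedes it below -/
import Mathlib

section
/- Let X be an n×p real matrix with XᵀX = I_p, let y ∈ ℝⁿ with y ≠ 0 and Xᵀy = 0, and let u ∈ ℝ^p be any nonzero vector. Then the matrix H = y uᵀ satisfies XᵀH = 0 (H is horizontal), and the Riemannian Hessian quadratic form of the variable-projection cost at X evaluated at H equals tr(Hᵀ(−(I_n − XXᵀ) y yᵀ H + H (Xᵀ y yᵀ X))) = −‖y‖₂⁴ ‖u‖₂² < 0. In particular, any critical point X with y orthogonal to the column span of X admits a direction of strictly negative curvature and is not a local minimum. -/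
/-!
With `H = y uᵀ` and `Xᵀ y = 0`, every term of the Hessian containing `Xᵀ y` vanishes and the
projector `I - X Xᵀ` fixes `y yᵀ`, so `Hess F(X)[H] = -(y yᵀ) H = -‖y‖² H`; pairing with `H`
gives `-‖y‖² ‖H‖_F² = -‖y‖⁴ ‖u‖²`.
-/

open Matrix

namespace Matrix

variable {R : Type*} [CommRing R] {n p q : Type*} [Fintype n] [Fintype p] [DecidableEq n]

/-- The Riemannian Hessian `Hess F(X)[H]` of `F(X) = ½‖(I - X Xᵀ) y‖²` on the Stiefel manifold. -/
def varProHessian (X : Matrix n p R) (y : n → R) (H : Matrix n p R) : Matrix n p R :=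
  -((1 - X * Xᵀ) * vecMulVec y y * H) + H * (Xᵀ * vecMulVec y y * X)

omit [Fintype p] [DecidableEq n] in
theorem mul_vecMulVec_eq_zero_of_mulVec_eq_zero {M : Matrix q n R} {y : n → R}
    (h : M *ᵥ y = 0) (v : p → R) : M * vecMulVec y v = 0 := by
  rw [mul_vecMulVec, h, zero_vecMulVec]

theorem varProHessian_vecMulVec {X : Matrix n p R} {y : n → R} (hXy : Xᵀ *ᵥ y = 0)
    (u : p → R) : varProHessian X y (vecMulVec y u) = -((y ⬝ᵥ y) • vecMulVec y u) := by
  have hXyy : Xᵀ * vecMulVec y y = 0 := mul_vecMulVec_eq_zero_of_mulVec_eq_zero hXy y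
  have hproj : (1 - X * Xᵀ) * vecMulVec y y = vecMulVec y y := by
    rw [Matrix.sub_mul, Matrix.one_mul, Matrix.mul_assoc, hXyy, Matrix.mul_zero, sub_zero]
  rw [varProHessian, hproj, hXyy, vecMulVec_mul_vecMulVec, vecMulVec_smul, Matrix.zero_mul,
    Matrix.mul_zero, add_zero]

omit [DecidableEq n] in
theorem trace_transpose_vecMulVec_mul_vecMulVec (y : n → R) (u : p → R) :
    trace ((vecMulVec y u)ᵀ * vecMulVec y u) = (y ⬝ᵥ y) * (u ⬝ᵥ u) := by
  rw [transpose_vecMulVec, vecMulVec_mul_vecMulVec, trace_vecMulVec, dotProduct_smul,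
    smul_eq_mul]

theorem trace_transpose_mul_varProHessian_vecMulVec {X : Matrix n p R} {y : n → R}
    (hXy : Xᵀ *ᵥ y = 0) (u : p → R) :
    trace ((vecMulVec y u)ᵀ * varProHessian X y (vecMulVec y u)) =
      -((y ⬝ᵥ y) ^ 2 * (u ⬝ᵥ u)) := by
  rw [varProHessian_vecMulVec hXy, Matrix.mul_neg, trace_neg, Matrix.mul_smul, trace_smul,
    trace_transpose_vecMulVec_mul_vecMulVec, smul_eq_mul]
  ring

end Matrix

theorem dotProduct_self_eq_sum_sq {n : Type*} [Fintype n] (v : n → ℝ) :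
    v ⬝ᵥ v = ∑ i, v i ^ 2 := by
  simp only [dotProduct, sq]

theorem dotProduct_self_pos {n : Type*} [Fintype n] {v : n → ℝ} (hv : v ≠ 0) :
    0 < v ⬝ᵥ v :=
  lt_of_le_of_ne (dotProduct_self_star_nonneg v) (Ne.symm (dotProduct_self_eq_zero.not.2 hv))

theorem stmt_1_general {n p : ℕ} (X : Matrix (Fin n) (Fin p) ℝ)
    (y : Fin n → ℝ) (hy : y ≠ 0) (hXy : Xᵀ.mulVec y = 0)
    (u : Fin p → ℝ) (hu : u ≠ 0) :
    Xᵀ * vecMulVec y u = 0 ∧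
    trace ((vecMulVec y u)ᵀ *
        (-((1 - X * Xᵀ) * vecMulVec y y * vecMulVec y u) +
          vecMulVec y u * (Xᵀ * vecMulVec y y * X))) =
      -((∑ i, (y i) ^ 2) ^ 2 * ∑ j, (u j) ^ 2) ∧
    trace ((vecMulVec y u)ᵀ *
        (-((1 - X * Xᵀ) * vecMulVec y y * vecMulVec y u) +
          vecMulVec y u * (Xᵀ * vecMulVec y y * X))) < 0 := by
  have hform : trace ((vecMulVec y u)ᵀ * varProHessian X y (vecMulVec y u)) =
      -((y ⬝ᵥ y) ^ 2 * (u ⬝ᵥ u)) :=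
    trace_transpose_mul_varProHessian_vecMulVec hXy u
  rw [dotProduct_self_eq_sum_sq y, dotProduct_self_eq_sum_sq u] at hform
  refine ⟨mul_vecMulVec_eq_zero_of_mulVec_eq_zero hXy u, hform, hform ▸ ?_⟩
  rw [← dotProduct_self_eq_sum_sq, ← dotProduct_self_eq_sum_sq, neg_lt_zero]
  exact mul_pos (pow_pos (dotProduct_self_pos hy) 2) (dotProduct_self_pos hu)

/-- at a critical point of VarPro with `Xᵀy = 0`, the direction `H = y uᵀ`
is horizontal and the Riemannian Hessian quadratic form at `H` equals `−‖y‖⁴‖u‖² < 0`. -/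
theorem stmt_1 {n p : ℕ} (X : Matrix (Fin n) (Fin p) ℝ) (hX : Xᵀ * X = 1)
    (y : Fin n → ℝ) (hy : y ≠ 0) (hXy : Xᵀ.mulVec y = 0)
    (u : Fin p → ℝ) (hu : u ≠ 0) :
    Xᵀ * vecMulVec y u = 0 ∧
    trace ((vecMulVec y u)ᵀ *
        (-((1 - X * Xᵀ) * vecMulVec y y * vecMulVec y u) +
          vecMulVec y u * (Xᵀ * vecMulVec y y * X))) =
      -((∑ i, (y i) ^ 2) ^ 2 * ∑ j, (u j) ^ 2) ∧
    trace ((vecMulVec y u)ᵀ *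
        (-((1 - X * Xᵀ) * vecMulVec y y * vecMulVec y u) +
          vecMulVec y u * (Xᵀ * vecMulVec y y * X))) < 0 :=
  stmt_1_general X y hy hXy u hu
end

section
/- Let Θ be an open subset of ℝ^m, let X : Θ → ℝ^{n×p} be twice differentiable with X(θ)ᵀX(θ) = I_p, let y ∈ ℝⁿ, and let G(θ) = ½‖(I_n − X(θ)X(θ)ᵀ)y‖². Let θ be a critical point of G at which the residual r = (I_n − XXᵀ)y is orthogonal to every column of every matrix dX(θ)[dθ], assume X(θ)ᵀ dX(θ)[dθ] = 0 for all dθ, and assume the injectivity condition that there exists C > 0 with ‖dX(θ)[dθ] z‖₂ ≥ C ‖z‖₂ ‖dθ‖₂ for all z ∈ ℝ^p and dθ ∈ ℝ^m. Setting v = X(θ)ᵀ y, the second-order quadratic form Q(dθ) = ⟨dX(θ)[dθ], Hess F(X)[dX(θ)[dθ]]⟩ + ⟨grad F(X), d²X(θ)[dθ,dθ]⟩ satisfies Q(dθ) ≥ (C² − ‖r‖₂ ‖d²X(θ)‖_op / ‖v‖₂) ‖v‖₂² ‖dθ‖₂² for all dθ. In particular, if ‖r‖₂ < C² ‖v‖₂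 / ‖d²X(θ)‖_op and v ≠ 0, then Q is positive definite and θ is a local minimum of G. -/
open Matrix

attribute [local instance] Matrix.frobeniusNormedAddCommGroup Matrix.frobeniusNormedSpace

open Filter Asymptotics Topology WithLp

/-!
Write `D = dX(θ)[dθ]` and `B = d²X(θ)[dθ, dθ]`. Since `rᵀD = 0`, the form `Q` collapses to
`‖Dv‖² - ⟨r, Bv⟩`, and injectivity plus Cauchy–Schwarz give the lower bound.

For the local minimum, put `X(θ + t) = X(θ) + E` with `E = Dt + ½B(t) + o(‖t‖²)` by second-order
Taylor. Expanding `G(θ + t) - G(θ)` exactly in `E` and using `Xᵀr = 0` (from `XᵀX = I`),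
`rᵀD = 0` and `XᵀD = 0` (so that `Dᵀy = 0`) leaves `½Q(t)` plus terms that are `o(‖t‖²)`.
As `Q(t) ≥ c‖t‖²` with `c > 0`, `θ` is a local minimum.
-/

section Taylor

variable {E F : Type*} [NormedAddCommGroup E] [NormedSpace ℝ E]
  [NormedAddCommGroup F] [NormedSpace ℝ F] {f : E → F} {x : E}

-- The symmetry of the second derivative is what makes the derivative of `½ f'' z z` equal `f'' z`.
theorem ContDiffAt.eventually_hasFDerivAt_sub_half_fderiv_fderiv (hf : ContDiffAt ℝ 2 f x) :
    ∀ᶠ z in 𝓝 (0 : E),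
      HasFDerivAt (fun z => f (x + z) - (2 : ℝ)⁻¹ • fderiv ℝ (fderiv ℝ f) x z z)
        (fderiv ℝ f (x + z) - fderiv ℝ (fderiv ℝ f) x z) z := by
  set f'' := fderiv ℝ (fderiv ℝ f) x
  have hsymm : ∀ v w, f'' v w = f'' w v := (hf.isSymmSndFDerivAt (by simp)).eq
  have hdiff : ∀ᶠ y in 𝓝 x, DifferentiableAt ℝ f y :=
    (hf.eventually (by simp)).mono fun y hy => hy.differentiableAt two_ne_zero
  rw [← map_add_left_nhds_zero x] at hdiff
  filter_upwards [eventually_map.1 hdiff] with z hz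
  have hquad := (f''.hasFDerivAt (x := z)).clm_apply (hasFDerivAt_id z)
  refine (((hasFDerivAt_comp_add_left x).2 hz.hasFDerivAt).sub
    (hquad.const_smul (2 : ℝ)⁻¹)).congr_fderiv ?_
  ext w
  simp only [_root_.sub_apply, _root_.smul_apply, _root_.add_apply, ContinuousLinearMap.coe_comp,
    Function.comp_apply, ContinuousLinearMap.id_apply, id_eq, ContinuousLinearMap.flip_apply,
    hsymm w z]
  module

-- The derivative of `z ↦ f (x + z) - ½ f'' z z` is `o(‖z‖)`-close to `fderiv f x`, so the mean
-- value inequality on `closedBall 0 ‖h‖` bounds its deviation from linearity by `o(‖h‖²)`.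
theorem ContDiffAt.isLittleO_sub_taylor_two (hf : ContDiffAt ℝ 2 f x) :
    (fun h => f (x + h) - f x - fderiv ℝ f x h - (2 : ℝ)⁻¹ • iteratedFDeriv ℝ 2 f x ![h, h])
      =o[𝓝 0] fun h => ‖h‖ ^ 2 := by
  set f'' := fderiv ℝ (fderiv ℝ f) x
  have hf'' : HasFDerivAt (fderiv ℝ f) f'' x :=
    ((hf.fderiv_right (m := 1) le_rfl).differentiableAt one_ne_zero).hasFDerivAt
  rw [isLittleO_iff]
  intro ε hε
  have hlo := (isLittleO_iff.1 (hasFDerivAt_iff_isLittleO_nhds_zero.1 hf'')) hε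
  obtain ⟨δ, hδ, hball⟩ := Metric.eventually_nhds_iff_ball.1
    (hf.eventually_hasFDerivAt_sub_half_fderiv_fderiv.and hlo)
  filter_upwards [Metric.ball_mem_nhds (0 : E) hδ] with h hh
  have hsub : Metric.closedBall (0 : E) ‖h‖ ⊆ Metric.ball 0 δ :=
    Metric.closedBall_subset_ball (by simpa using hh)
  have hmvt := (convex_closedBall (0 : E) ‖h‖).norm_image_sub_le_of_norm_hasFDerivWithin_le'
    (fun z hz => (hball z (hsub hz)).1.hasFDerivWithinAt) (φ := fderiv ℝ f x) (C := ε * ‖h‖)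
    (fun z hz => ?_) (Metric.mem_closedBall_self (norm_nonneg h)) (y := h) (by simp)
  · calc ‖f (x + h) - f x - fderiv ℝ f x h - (2 : ℝ)⁻¹ • iteratedFDeriv ℝ 2 f x ![h, h]‖
        = ‖f (x + h) - (2 : ℝ)⁻¹ • f'' h h - (f (x + 0) - (2 : ℝ)⁻¹ • f'' 0 0)
            - fderiv ℝ f x (h - 0)‖ := by
          rw [iteratedFDeriv_two_apply]; simp [f'']; abel_nf
      _ ≤ ε * ‖h‖ * ‖h - 0‖ := hmvt
      _ = ε * ‖‖h‖ ^ 2‖ := by simp; ring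
  · have hz' : ‖z‖ ≤ ‖h‖ := by simpa using hz
    calc ‖fderiv ℝ f (x + z) - f'' z - fderiv ℝ f x‖
        = ‖fderiv ℝ f (x + z) - fderiv ℝ f x - f'' z‖ := by rw [sub_right_comm]
      _ ≤ ε * ‖z‖ := (hball z (hsub hz)).2
      _ ≤ ε * ‖h‖ := by gcongr

theorem norm_iteratedFDeriv_two_apply_le (f : E → F) (x h : E) :
    ‖iteratedFDeriv ℝ 2 f x ![h, h]‖ ≤ ‖iteratedFDeriv ℝ 2 f x‖ * ‖h‖ ^ 2 := by
  simpa [Fin.prod_univ_two, ← sq] using (iteratedFDeriv ℝ 2 f x).le_opNorm ![h, h]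

theorem ContDiffAt.isBigO_sub_sub_fderiv (hf : ContDiffAt ℝ 2 f x) :
    (fun h => f (x + h) - f x - fderiv ℝ f x h) =O[𝓝 0] fun h => ‖h‖ ^ 2 := by
  have hB : (fun h => iteratedFDeriv ℝ 2 f x ![h, h]) =O[𝓝 0] fun h => ‖h‖ ^ 2 :=
    isBigO_of_le' (c := ‖iteratedFDeriv ℝ 2 f x‖) _ fun h =>
      (norm_iteratedFDeriv_two_apply_le f x h).trans_eq (by simp)
  exact (hf.isLittleO_sub_taylor_two.isBigO.add (hB.const_smul_left (2 : ℝ)⁻¹)).congr_left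
    fun h => by simp

end Taylor

theorem IsLocalMin.of_isLittleO_sub_of_le {E : Type*} [NormedAddCommGroup E] {f q : E → ℝ} {x : E}
    {c : ℝ} (hc : 0 < c) (hq : ∀ h, c * ‖h‖ ^ 2 ≤ q h)
    (hf : (fun h => f (x + h) - f x - q h) =o[𝓝 0] fun h => ‖h‖ ^ 2) : IsLocalMin f x := by
  rw [IsLocalMin, IsMinFilter, ← map_add_left_nhds_zero x, eventually_map]
  filter_upwards [isLittleO_iff.1 hf hc] with h hh
  rw [norm_pow, norm_norm, Real.norm_eq_abs] at hh
  linarith [hq h, neg_abs_le (f (x + h) - f x - q h)]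

section

variable {ι κ : Type*} [Fintype ι] [Fintype κ]

theorem sqrt_sum_sq_eq_norm_toLp (u : ι → ℝ) : √(∑ i, u i ^ 2) = ‖toLp 2 u‖ := by
  simp [EuclideanSpace.norm_eq]

theorem dotProduct_self_eq_norm_toLp_sq (u : ι → ℝ) : u ⬝ᵥ u = ‖toLp 2 u‖ ^ 2 := by
  rw [← real_inner_self_eq_norm_sq]; rfl

theorem abs_dotProduct_le (u w : ι → ℝ) : |u ⬝ᵥ w| ≤ ‖toLp 2 u‖ * ‖toLp 2 w‖ := by
  simpa [EuclideanSpace.inner_toLp_toLp, dotProduct_comm] using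
    abs_real_inner_le_norm (toLp 2 u) (toLp 2 w)

theorem norm_toLp_mulVec_le (A : Matrix ι κ ℝ) (v : κ → ℝ) :
    ‖toLp 2 (A *ᵥ v)‖ ≤ ‖A‖ * ‖toLp 2 v‖ := by
  have := frobenius_norm_mul A (replicateCol Unit v)
  rwa [← replicateCol_mulVec, frobenius_norm_replicateCol, frobenius_norm_replicateCol] at this

section Asymptotics

variable {α : Type*} {l : Filter α}

theorem isBigO_dotProduct (u w : α → ι → ℝ) :
    (fun x => u x ⬝ᵥ w x) =O[l] fun x => ‖toLp 2 (u x)‖ * ‖toLp 2 (w x)‖ :=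
  isBigO_of_le l fun x => by simpa [abs_mul] using abs_dotProduct_le (u x) (w x)

theorem isBigO_const_dotProduct (r : ι → ℝ) (w : α → ι → ℝ) :
    (fun x => r ⬝ᵥ w x) =O[l] fun x => toLp 2 (w x) :=
  .of_bound ‖toLp 2 r‖ (.of_forall fun x => by simpa using abs_dotProduct_le r (w x))

theorem isBigO_mulVec (A : α → Matrix ι κ ℝ) (v : α → κ → ℝ) :
    (fun x => toLp 2 (A x *ᵥ v x)) =O[l] fun x => ‖A x‖ * ‖toLp 2 (v x)‖ :=
  isBigO_of_le l fun x => by simpa [abs_mul] using norm_toLp_mulVec_le (A x) (v x)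

theorem isBigO_mulVec_const (A : α → Matrix ι κ ℝ) (v : κ → ℝ) :
    (fun x => toLp 2 (A x *ᵥ v)) =O[l] A :=
  .of_bound ‖toLp 2 v‖ <| .of_forall fun x => by
    simpa [mul_comm] using norm_toLp_mulVec_le (A x) v

theorem isBigO_const_mulVec (A : Matrix ι κ ℝ) (v : α → κ → ℝ) :
    (fun x => toLp 2 (A *ᵥ v x)) =O[l] fun x => toLp 2 (v x) :=
  .of_bound ‖A‖ (.of_forall fun x => norm_toLp_mulVec_le A (v x))

theorem isBigO_transpose (A : α → Matrix ι κ ℝ) : (fun x => (A x)ᵀ) =O[l] A :=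
  isBigO_of_le l fun x => (frobenius_norm_transpose (A x)).le

theorem Asymptotics.IsBigO.mul_isLittleO_norm_pow {E : Type*} [NormedAddCommGroup E] {f g : E → ℝ}
    {a b n : ℕ} (hf : f =O[𝓝 0] fun t => ‖t‖ ^ a) (hg : g =O[𝓝 0] fun t => ‖t‖ ^ b)
    (h : n < a + b) : (fun t => f t * g t) =o[𝓝 0] fun t => ‖t‖ ^ n :=
  (hf.mul hg).trans_isLittleO ((isLittleO_norm_pow_norm_pow h).congr_left fun _ => pow_add _ _ _)

end Asymptotics

variable [DecidableEq ι]

noncomputable def residualLoss (X : Matrix ι κ ℝ) (y : ι → ℝ) : ℝ :=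
  1 / 2 * ∑ i, ((1 - X * Xᵀ) *ᵥ y) i ^ 2

-- `⟨D, Hess F(X)[D]⟩ + ⟨grad F(X), B⟩` for `F = residualLoss · y`, the Frobenius inner products
-- written as traces.
noncomputable def secondOrderForm (X D B : Matrix ι κ ℝ) (y : ι → ℝ) : ℝ :=
  trace (Dᵀ * (-((1 - X * Xᵀ) * vecMulVec y y * D) + D * (Xᵀ * vecMulVec y y * X))) +
    trace ((-((1 - X * Xᵀ) * vecMulVec y y * X))ᵀ * B)

theorem secondOrderForm_eq_dotProduct_sub (X D B : Matrix ι κ ℝ) (y : ι → ℝ)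
    (hD : ((1 - X * Xᵀ) *ᵥ y) ᵥ* D = 0) :
    secondOrderForm X D B y =
      (D *ᵥ (Xᵀ *ᵥ y)) ⬝ᵥ (D *ᵥ (Xᵀ *ᵥ y)) - ((1 - X * Xᵀ) *ᵥ y) ⬝ᵥ (B *ᵥ (Xᵀ *ᵥ y)) := by
  simp only [secondOrderForm, mul_vecMulVec, vecMulVec_mul, Matrix.mul_add, Matrix.mul_neg,
    trace_add, trace_neg, transpose_neg, transpose_vecMulVec, trace_vecMulVec, Matrix.neg_mul,
    mulVec_transpose, hD, zero_dotProduct, neg_zero, zero_add]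
  rw [← dotProduct_mulVec, dotProduct_mulVec _ B, dotProduct_comm (y ᵥ* X)]
  ring

theorem le_secondOrderForm (X D B : Matrix ι κ ℝ) (y : ι → ℝ) {C β s : ℝ} (hC : 0 ≤ C)
    (hs : 0 ≤ s) (hres : ((1 - X * Xᵀ) *ᵥ y) ᵥ* D = 0)
    (hinj : C * ‖toLp 2 (Xᵀ *ᵥ y)‖ * s ≤ ‖toLp 2 (D *ᵥ (Xᵀ *ᵥ y))‖) (hB : ‖B‖ ≤ β * s ^ 2) :
    (C ^ 2 - ‖toLp 2 ((1 - X * Xᵀ) *ᵥ y)‖ * β / ‖toLp 2 (Xᵀ *ᵥ y)‖) *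
        ‖toLp 2 (Xᵀ *ᵥ y)‖ ^ 2 * s ^ 2 ≤ secondOrderForm X D B y := by
  set r := (1 - X * Xᵀ) *ᵥ y
  set v := Xᵀ *ᵥ y
  rw [secondOrderForm_eq_dotProduct_sub X D B y hres, dotProduct_self_eq_norm_toLp_sq]
  have hDv : (C * ‖toLp 2 v‖ * s) ^ 2 ≤ ‖toLp 2 (D *ᵥ v)‖ ^ 2 :=
    pow_le_pow_left₀ (by positivity) hinj 2
  have hBv : r ⬝ᵥ (B *ᵥ v) ≤ ‖toLp 2 r‖ * (β * s ^ 2 * ‖toLp 2 v‖) :=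
    (le_abs_self _).trans <| (abs_dotProduct_le _ _).trans <| by
      gcongr
      exact (norm_toLp_mulVec_le B v).trans (by gcongr)
  have hlhs : (C ^ 2 - ‖toLp 2 r‖ * β / ‖toLp 2 v‖) * ‖toLp 2 v‖ ^ 2 * s ^ 2 =
      (C * ‖toLp 2 v‖ * s) ^ 2 - ‖toLp 2 r‖ * (β * s ^ 2 * ‖toLp 2 v‖) := by
    rcases eq_or_ne ‖toLp 2 v‖ 0 with hv | hv
    · simp [hv]
    · field_simp
  linarith

theorem residualLoss_eq_dotProduct (X : Matrix ι κ ℝ) (y : ι → ℝ) :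
    residualLoss X y = 2⁻¹ * (((1 - X * Xᵀ) *ᵥ y) ⬝ᵥ ((1 - X * Xᵀ) *ᵥ y)) := by
  simp [residualLoss, dotProduct, sq]

-- With `E = X(θ + t) - X(θ)`, `D = dX(θ)[t]`, `B = d²X(θ)[t, t]`, each term on the right is
-- `o(‖t‖²)`: it is linear in the Taylor remainder `E - D - ½B`, or has order above two in
-- `E - D = O(‖t‖²)` and `E, D = O(‖t‖)`.
theorem residualLoss_add_sub_half_secondOrderForm [DecidableEq κ] (X D B E : Matrix ι κ ℝ)
    (y : ι → ℝ) (horth : Xᵀ * X = 1) (hres : ((1 - X * Xᵀ) *ᵥ y) ᵥ* D = 0) (hhoriz : Xᵀ * D = 0) :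
    let r := (1 - X * Xᵀ) *ᵥ y
    let v := Xᵀ *ᵥ y
    let u := X *ᵥ ((E - D)ᵀ *ᵥ y) + (E - D) *ᵥ v + E *ᵥ (Eᵀ *ᵥ y)
    residualLoss (X + E) y - residualLoss X y - 2⁻¹ * secondOrderForm X D B y =
      -(r ⬝ᵥ ((E - D - (2 : ℝ)⁻¹ • B) *ᵥ v)) - ((E - D)ᵀ *ᵥ r) ⬝ᵥ (Eᵀ *ᵥ y) +
        (D *ᵥ v) ⬝ᵥ u + 2⁻¹ * (u ⬝ᵥ u) := by
  intro r v u
  have hXr : Xᵀ *ᵥ r = 0 := by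
    rw [mulVec_mulVec, Matrix.mul_sub, Matrix.mul_one, ← Matrix.mul_assoc, horth,
      Matrix.one_mul, sub_self, zero_mulVec]
  have hDy : Dᵀ *ᵥ y = 0 := by
    have hy : y = r + X *ᵥ v := by
      simp [r, v, sub_mulVec, mulVec_mulVec]
    rw [hy, mulVec_add, mulVec_transpose, hres, mulVec_mulVec, ← transpose_transpose X,
      ← transpose_mul, hhoriz]
    simp
  have hres' : (1 - (X + E) * (X + E)ᵀ) *ᵥ y = r - (D *ᵥ v + u) := by
    simp only [u, v, r, sub_mulVec, add_mulVec, transpose_add, transpose_sub, mulVec_sub,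
      Matrix.add_mul, Matrix.mul_add, one_mulVec, ← mulVec_mulVec, hDy, mulVec_zero]
    abel
  have hrDv : r ⬝ᵥ (D *ᵥ v) = 0 := by rw [dotProduct_mulVec, hres, zero_dotProduct]
  have hru : r ⬝ᵥ u = r ⬝ᵥ ((E - D) *ᵥ v) + ((E - D)ᵀ *ᵥ r) ⬝ᵥ (Eᵀ *ᵥ y) := by
    rw [dotProduct_add, dotProduct_add, dotProduct_mulVec r X, ← mulVec_transpose, hXr,
      zero_dotProduct, zero_add, transpose_sub, sub_mulVec Eᵀ, mulVec_transpose D, hres, sub_zero,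
      dotProduct_mulVec r E, ← mulVec_transpose E r]
  rw [residualLoss_eq_dotProduct, residualLoss_eq_dotProduct,
    secondOrderForm_eq_dotProduct_sub X D B y hres, hres']
  change 2⁻¹ * _ - 2⁻¹ * (r ⬝ᵥ r) - 2⁻¹ * ((D *ᵥ v) ⬝ᵥ (D *ᵥ v) - r ⬝ᵥ (B *ᵥ v)) = _
  simp only [sub_dotProduct, dotProduct_sub, add_dotProduct, dotProduct_add]
  rw [hru, hrDv, dotProduct_comm u r, hru, dotProduct_comm (D *ᵥ v) r, hrDv,
    dotProduct_comm u (D *ᵥ v), sub_mulVec (E - D), smul_mulVec, dotProduct_sub,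
    dotProduct_smul, smul_eq_mul]
  ring

theorem isLittleO_residualLoss_add_sub_half_secondOrderForm {E : Type*} [NormedAddCommGroup E]
    [DecidableEq κ] (X : Matrix ι κ ℝ) (y : ι → ℝ) {Δ D B : E → Matrix ι κ ℝ}
    (horth : Xᵀ * X = 1) (hres : ∀ t, ((1 - X * Xᵀ) *ᵥ y) ᵥ* D t = 0)
    (hhoriz : ∀ t, Xᵀ * D t = 0)
    (hS : (fun t => Δ t - D t - (2 : ℝ)⁻¹ • B t) =o[𝓝 0] fun t => ‖t‖ ^ 2)
    (hR : (fun t => Δ t - D t) =O[𝓝 0] fun t => ‖t‖ ^ 2)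
    (hD : D =O[𝓝 0] fun t => ‖t‖ ^ 1) :
    (fun t => residualLoss (X + Δ t) y - residualLoss X y - 2⁻¹ * secondOrderForm X (D t) (B t) y)
      =o[𝓝 0] fun t => ‖t‖ ^ 2 := by
  set r := (1 - X * Xᵀ) *ᵥ y
  set v := Xᵀ *ᵥ y
  have hΔ : Δ =O[𝓝 0] fun t => ‖t‖ ^ 1 :=
    (hD.add (hR.trans (isLittleO_norm_pow_norm_pow one_lt_two).isBigO)).congr_left
      fun t => by simp
  have hΔy : (fun t => toLp 2 ((Δ t)ᵀ *ᵥ y)) =O[𝓝 0] fun t => ‖t‖ ^ 1 :=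
    ((isBigO_mulVec_const _ y).trans (isBigO_transpose Δ)).trans hΔ
  set u := fun t => X *ᵥ ((Δ t - D t)ᵀ *ᵥ y) + (Δ t - D t) *ᵥ v + Δ t *ᵥ ((Δ t)ᵀ *ᵥ y)
  have hu : (fun t => toLp 2 (u t)) =O[𝓝 0] fun t => ‖t‖ ^ 2 := by
    have h₁ := (isBigO_const_mulVec X _).trans
      ((isBigO_mulVec_const _ y).trans ((isBigO_transpose _).trans hR))
    have h₂ := (isBigO_mulVec_const _ v).trans hR
    have h₃ := ((isBigO_mulVec Δ _).trans (hΔ.norm_left.mul hΔy.norm_left)).congr_right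
      fun t => by rw [← pow_add]
    exact ((h₁.add h₂).add h₃).congr_left fun t => by simp [u]
  have h₁ : (fun t => r ⬝ᵥ ((Δ t - D t - (2 : ℝ)⁻¹ • B t) *ᵥ v)) =o[𝓝 0] fun t => ‖t‖ ^ 2 :=
    (isBigO_const_dotProduct r _).trans_isLittleO ((isBigO_mulVec_const _ v).trans_isLittleO hS)
  have h₂ : (fun t => ((Δ t - D t)ᵀ *ᵥ r) ⬝ᵥ ((Δ t)ᵀ *ᵥ y)) =o[𝓝 0] fun t => ‖t‖ ^ 2 :=
    (isBigO_dotProduct _ _).trans_isLittleO <|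
      (((isBigO_mulVec_const _ r).trans ((isBigO_transpose _).trans hR)).norm_left)
      |>.mul_isLittleO_norm_pow hΔy.norm_left (by norm_num)
  have h₃ : (fun t => (D t *ᵥ v) ⬝ᵥ u t) =o[𝓝 0] fun t => ‖t‖ ^ 2 :=
    (isBigO_dotProduct _ _).trans_isLittleO <|
      ((isBigO_mulVec_const _ v).trans hD).norm_left.mul_isLittleO_norm_pow hu.norm_left
        (by norm_num)
  have h₄ : (fun t => u t ⬝ᵥ u t) =o[𝓝 0] fun t => ‖t‖ ^ 2 :=
    (isBigO_dotProduct _ _).trans_isLittleO <|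
      hu.norm_left.mul_isLittleO_norm_pow hu.norm_left (by norm_num)
  exact (((h₁.neg_left.sub h₂).add h₃).add (h₄.const_mul_left 2⁻¹)).congr_left fun t =>
    (residualLoss_add_sub_half_secondOrderForm X (D t) (B t) (Δ t) y horth (hres t)
      (hhoriz t)).symm

theorem isLittleO_residualLoss_sub_half_secondOrderForm {E : Type*} [NormedAddCommGroup E]
    [NormedSpace ℝ E] [DecidableEq κ] {X : E → Matrix ι κ ℝ} {θ : E} (y : ι → ℝ)
    (hX : ContDiffAt ℝ 2 X θ) (horth : (X θ)ᵀ * X θ = 1)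
    (hres : ∀ t, ((1 - X θ * (X θ)ᵀ) *ᵥ y) ᵥ* fderiv ℝ X θ t = 0)
    (hhoriz : ∀ t, (X θ)ᵀ * fderiv ℝ X θ t = 0) :
    (fun t => residualLoss (X (θ + t)) y - residualLoss (X θ) y -
        2⁻¹ * secondOrderForm (X θ) (fderiv ℝ X θ t) (iteratedFDeriv ℝ 2 X θ ![t, t]) y)
      =o[𝓝 0] fun t => ‖t‖ ^ 2 := by
  have hD : fderiv ℝ X θ =O[𝓝 0] fun t => ‖t‖ ^ 1 :=
    ((fderiv ℝ X θ).isBigO_id _).norm_right.congr_right fun _ => (pow_one _).symm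
  simpa using isLittleO_residualLoss_add_sub_half_secondOrderForm (X θ) y horth hres hhoriz
    hX.isLittleO_sub_taylor_two hX.isBigO_sub_sub_fderiv hD

end

theorem stmt_3_general {m n p : ℕ}
    (Θ : Set (EuclideanSpace ℝ (Fin m)))
    (X : EuclideanSpace ℝ (Fin m) → Matrix (Fin n) (Fin p) ℝ)
    (y : Fin n → ℝ) (θ : EuclideanSpace ℝ (Fin m)) (hθ : θ ∈ Θ)
    (hC2 : ContDiffAt ℝ 2 X θ)
    (hXst : ∀ θ' ∈ Θ, (X θ')ᵀ * X θ' = 1)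
    (hres : ∀ (dθ : EuclideanSpace ℝ (Fin m)) (j : Fin p),
      ∑ i, (1 - X θ * (X θ)ᵀ).mulVec y i * fderiv ℝ X θ dθ i j = 0)
    (hhoriz : ∀ dθ : EuclideanSpace ℝ (Fin m), (X θ)ᵀ * fderiv ℝ X θ dθ = 0)
    (C : ℝ) (hC : 0 < C)
    (hinj : ∀ (z : Fin p → ℝ) (dθ : EuclideanSpace ℝ (Fin m)),
      Real.sqrt (∑ i, ((fderiv ℝ X θ dθ).mulVec z i) ^ 2) ≥
        C * Real.sqrt (∑ i, (z i) ^ 2) * ‖dθ‖) :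
    let G : EuclideanSpace ℝ (Fin m) → ℝ :=
      fun θ' => (1 / 2) * ∑ i, ((1 - X θ' * (X θ')ᵀ).mulVec y i) ^ 2
    let M : Matrix (Fin n) (Fin n) ℝ := vecMulVec y y
    let r : Fin n → ℝ := (1 - X θ * (X θ)ᵀ).mulVec y
    let v : Fin p → ℝ := (X θ)ᵀ.mulVec y
    let Q : EuclideanSpace ℝ (Fin m) → ℝ := fun dθ =>
      trace ((fderiv ℝ X θ dθ)ᵀ *
          (-((1 - X θ * (X θ)ᵀ) * M * fderiv ℝ X θ dθ) +
            fderiv ℝ X θ dθ * ((X θ)ᵀ * M * X θ))) +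
        trace ((-((1 - X θ * (X θ)ᵀ) * M * X θ))ᵀ * iteratedFDeriv ℝ 2 X θ ![dθ, dθ])
    (∀ dθ : EuclideanSpace ℝ (Fin m),
      Q dθ ≥
        (C ^ 2 - Real.sqrt (∑ i, (r i) ^ 2) * ‖iteratedFDeriv ℝ 2 X θ‖ /
            Real.sqrt (∑ i, (v i) ^ 2)) *
          Real.sqrt (∑ i, (v i) ^ 2) ^ 2 * ‖dθ‖ ^ 2) ∧
    ((Real.sqrt (∑ i, (r i) ^ 2) <
        C ^ 2 * Real.sqrt (∑ i, (v i) ^ 2) / ‖iteratedFDeriv ℝ 2 X θ‖ ∧ v ≠ 0) →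
      (∀ dθ : EuclideanSpace ℝ (Fin m), dθ ≠ 0 → 0 < Q dθ) ∧ IsLocalMin G θ) := by
  intro G M r v Q
  simp only [sqrt_sum_sq_eq_norm_toLp] at hinj ⊢
  set β := ‖iteratedFDeriv ℝ 2 X θ‖
  set c := C ^ 2 - ‖toLp 2 r‖ * β / ‖toLp 2 v‖
  have hres' : ∀ dθ, r ᵥ* fderiv ℝ X θ dθ = 0 := fun dθ => funext (hres dθ)
  have hQ : ∀ dθ, c * ‖toLp 2 v‖ ^ 2 * ‖dθ‖ ^ 2 ≤ Q dθ := fun dθ =>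
    le_secondOrderForm _ _ _ y hC.le (norm_nonneg dθ) (hres' dθ) (hinj v dθ)
      (norm_iteratedFDeriv_two_apply_le X θ dθ)
  refine ⟨hQ, fun ⟨hsmall, hv0⟩ => ?_⟩
  have hv : 0 < ‖toLp 2 v‖ := by simpa using hv0
  have hc : 0 < c := by
    refine sub_pos.2 ((div_lt_iff₀ hv).2 ?_)
    rcases (norm_nonneg _ : 0 ≤ β).eq_or_lt with hβ | hβ
    · rw [show β = 0 from hβ.symm, mul_zero]
      positivity
    · exact (lt_div_iff₀ hβ).1 hsmall
  have hQpos : ∀ dθ, dθ ≠ 0 → 0 < Q dθ := fun dθ hdθ =>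
    lt_of_lt_of_le (by have := norm_pos_iff.2 hdθ; positivity) (hQ dθ)
  refine ⟨hQpos, IsLocalMin.of_isLittleO_sub_of_le (q := fun t => 2⁻¹ * Q t)
    (c := 2⁻¹ * (c * ‖toLp 2 v‖ ^ 2)) (by positivity) (fun t => ?_)
    (isLittleO_residualLoss_sub_half_secondOrderForm y hC2 (hXst θ hθ) hres' hhoriz)⟩
  have := hQ t
  linarith

/-- under-parametrized regime.  At a critical point `θ` of
`G(θ) = ½‖(I − X(θ)X(θ)ᵀ)y‖²` where the residual `r = (I − XXᵀ)y` is orthogonal to all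
columns of all `dX(θ)[dθ]`, with horizontal derivatives and the injectivity bound
`‖dX(θ)[dθ]z‖ ≥ C‖z‖‖dθ‖`, the second-order quadratic form
`Q(dθ) = ⟨dX[dθ], Hess F(X)[dX[dθ]]⟩ + ⟨grad F(X), d²X[dθ,dθ]⟩` satisfies
`Q(dθ) ≥ (C² − ‖r‖‖d²X‖/‖v‖)‖v‖²‖dθ‖²` with `v = Xᵀy`; in particular if
`‖r‖ < C²‖v‖/‖d²X‖` and `v ≠ 0` then `Q` is positive definite and `θ` is a local
minimum of `G`. -/
theorem stmt_3 {m n p : ℕ}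
    (Θ : Set (EuclideanSpace ℝ (Fin m))) (hΘ : IsOpen Θ)
    (X : EuclideanSpace ℝ (Fin m) → Matrix (Fin n) (Fin p) ℝ)
    (y : Fin n → ℝ) (θ : EuclideanSpace ℝ (Fin m)) (hθ : θ ∈ Θ)
    (hC2 : ContDiffAt ℝ 2 X θ)
    (hXst : ∀ θ' ∈ Θ, (X θ')ᵀ * X θ' = 1)
    (hcrit : fderiv ℝ
      (fun θ' => (1 / 2) * ∑ i, ((1 - X θ' * (X θ')ᵀ).mulVec y i) ^ 2) θ = 0)
    (hres : ∀ (dθ : EuclideanSpace ℝ (Fin m)) (j : Fin p),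
      ∑ i, (1 - X θ * (X θ)ᵀ).mulVec y i * fderiv ℝ X θ dθ i j = 0)
    (hhoriz : ∀ dθ : EuclideanSpace ℝ (Fin m), (X θ)ᵀ * fderiv ℝ X θ dθ = 0)
    (C : ℝ) (hC : 0 < C)
    (hinj : ∀ (z : Fin p → ℝ) (dθ : EuclideanSpace ℝ (Fin m)),
      Real.sqrt (∑ i, ((fderiv ℝ X θ dθ).mulVec z i) ^ 2) ≥
        C * Real.sqrt (∑ i, (z i) ^ 2) * ‖dθ‖) :
    let G : EuclideanSpace ℝ (Fin m) → ℝ :=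
      fun θ' => (1 / 2) * ∑ i, ((1 - X θ' * (X θ')ᵀ).mulVec y i) ^ 2
    let M : Matrix (Fin n) (Fin n) ℝ := vecMulVec y y
    let r : Fin n → ℝ := (1 - X θ * (X θ)ᵀ).mulVec y
    let v : Fin p → ℝ := (X θ)ᵀ.mulVec y
    let Q : EuclideanSpace ℝ (Fin m) → ℝ := fun dθ =>
      trace ((fderiv ℝ X θ dθ)ᵀ *
          (-((1 - X θ * (X θ)ᵀ) * M * fderiv ℝ X θ dθ) +
            fderiv ℝ X θ dθ * ((X θ)ᵀ * M * X θ))) +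
        trace ((-((1 - X θ * (X θ)ᵀ) * M * X θ))ᵀ * iteratedFDeriv ℝ 2 X θ ![dθ, dθ])
    (∀ dθ : EuclideanSpace ℝ (Fin m),
      Q dθ ≥
        (C ^ 2 - Real.sqrt (∑ i, (r i) ^ 2) * ‖iteratedFDeriv ℝ 2 X θ‖ /
            Real.sqrt (∑ i, (v i) ^ 2)) *
          Real.sqrt (∑ i, (v i) ^ 2) ^ 2 * ‖dθ‖ ^ 2) ∧
    ((Real.sqrt (∑ i, (r i) ^ 2) <
        C ^ 2 * Real.sqrt (∑ i, (v i) ^ 2) / ‖iteratedFDeriv ℝ 2 X θ‖ ∧ v ≠ 0) →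
      (∀ dθ : EuclideanSpace ℝ (Fin m), dθ ≠ 0 → 0 < Q dθ) ∧ IsLocalMin G θ) :=
  stmt_3_general Θ X y θ hθ hC2 hXst hres hhoriz C hC hinj
end

section
/- Let Ω ⊆ ℝ^d be a nonempty open connected set of finite positive Lebesgue measure, and let f₁, …, f_p : Ω → ℝ be real analytic functions that are linearly independent as elements of the vector space of real-valued functions on Ω. Let X₁, …, X_p be independent random variables, each distributed according to the normalized Lebesgue measure on Ω. Then the p×p random matrix M with entries M_{ij} = f_j(X_i) is invertible almost surely: ℙ(det M ≠ 0) = 1. -/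
/-!
The determinant `x ↦ det (f j (x i))` is analytic on the connected open set `Ωᵖ`, and it is not
identically zero there: expanding along a row and inducting on `p`, linear independence of the
`f j` produces points at which it does not vanish. The zero set of an analytic function that does
not vanish identically on a connected open set is Lebesgue-null. On the line the zeros are
isolated, hence countable; the class of measures with this property is stable under products by
Fubini, because almost every slice of such a function is again not identically zero. Finally, by
independence the law of `(X₁, …, X_p)` is the product of the marginals, which are absolutely
continuous and concentrated on `Ω`.
-/

open Matrix MeasureTheory ProbabilityTheory Filter Set Metric

theorem ContinuousOn.measurableSet_sep_eq_zero {X : Type*} [TopologicalSpace X]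
    [MeasurableSpace X] [OpensMeasurableSpace X] {U : Set X} {f : X → ℝ}
    (hf : ContinuousOn f U) (hU : IsOpen U) : MeasurableSet {x ∈ U | f x = 0} := by
  have hdiff : {x ∈ U | f x = 0} = U \ (U ∩ f ⁻¹' {0}ᶜ) := by ext; simp
  rw [hdiff]
  exact hU.measurableSet.diff (hf.isOpen_inter_preimage hU isOpen_compl_singleton).measurableSet

def HasNullAnalyticZeros {E : Type*} [NormedAddCommGroup E] [NormedSpace ℝ E]
    [MeasurableSpace E] (μ : Measure E) : Prop :=
  ∀ ⦃U : Set E⦄ ⦃f : E → ℝ⦄, IsOpen U → IsPreconnected U → AnalyticOnNhd ℝ f U →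
    (∃ x ∈ U, f x ≠ 0) → μ {x ∈ U | f x = 0} = 0

theorem hasNullAnalyticZeros_real (μ : Measure ℝ) [NullSingletonClass μ] :
    HasNullAnalyticZeros μ := by
  rintro U f - hUc hf ⟨x₀, hx₀, hfx₀⟩
  have hcod : ∀ᶠ x in codiscreteWithin U, f x ≠ 0 :=
    (hf.eqOn_zero_or_eventually_ne_zero_of_preconnected hUc).resolve_left fun h => hfx₀ (h hx₀)
  have hdisc : IsDiscrete ({x | f x = 0} ∩ U) := isDiscrete_of_codiscreteWithin hcod
  show μ (U ∩ {x | f x = 0}) = 0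
  rw [inter_comm]
  exact ((HereditarilyLindelofSpace.isLindelof _).countable_of_isDiscrete hdisc).measure_zero μ

section

variable {E F : Type*} [NormedAddCommGroup E] [NormedSpace ℝ E] [MeasurableSpace E]
  [NormedAddCommGroup F] [NormedSpace ℝ F] [MeasurableSpace F] {μ : Measure E} {ν : Measure F}

theorem HasNullAnalyticZeros.of_absolutelyContinuous {μ' : Measure E}
    (h : HasNullAnalyticZeros μ') (hμ : μ ≪ μ') : HasNullAnalyticZeros μ :=
  fun _ _ hU hUc hf hne => hμ (h hU hUc hf hne)

theorem HasNullAnalyticZeros.map_continuousLinearEquiv [OpensMeasurableSpace E] [BorelSpace F]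
    (h : HasNullAnalyticZeros μ) (e : E ≃L[ℝ] F) : HasNullAnalyticZeros (μ.map e) := by
  rintro U f hU hUc hf ⟨x, hx, hfx⟩
  rw [Measure.map_apply e.continuous.measurable (hf.continuousOn.measurableSet_sep_eq_zero hU)]
  refine h (U := e ⁻¹' U) (f := f ∘ e) (hU.preimage e.continuous) ?_
    (fun y hy => (hf (e y) hy).comp ((e : E →L[ℝ] F).analyticAt y)) ⟨e.symm x, by simpa, by simpa⟩
  rw [← e.image_symm_eq_preimage]
  exact hUc.image _ e.symm.continuous.continuousOn

theorem HasNullAnalyticZeros.prod_measure_sep_prod_eq_zero [OpensMeasurableSpace (E × F)]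
    [SFinite ν] (hμ : HasNullAnalyticZeros μ) (hν : HasNullAnalyticZeros ν)
    {V : Set E} {W : Set F} (hV : IsOpen V) (hVc : IsPreconnected V) (hW : IsOpen W)
    (hWc : IsPreconnected W) {f : E × F → ℝ} (hf : AnalyticOnNhd ℝ f (V ×ˢ W))
    {a : E} {b : F} (ha : a ∈ V) (hb : b ∈ W) (hab : f (a, b) ≠ 0) :
    μ.prod ν {x ∈ V ×ˢ W | f x = 0} = 0 := by
  rw [Measure.measure_prod_null (hf.continuousOn.measurableSet_sep_eq_zero (hV.prod hW))]
  have hslice : μ {y ∈ V | f (y, b) = 0} = 0 :=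
    hμ hV hVc (fun y hy => (hf (y, b) ⟨hy, hb⟩).comp₂ analyticAt_id analyticAt_const)
      ⟨a, ha, hab⟩
  filter_upwards [measure_eq_zero_iff_ae_notMem.1 hslice] with y hy
  rw [Pi.zero_apply]
  -- For `μ`-a.e. `y ∈ V` the slice `f (y, ·)` does not vanish at `b`.
  by_cases hyV : y ∈ V
  · have hyb : f (y, b) ≠ 0 := fun h0 => hy ⟨hyV, h0⟩
    refine measure_mono_null (t := {z ∈ W | f (y, z) = 0}) (fun z hz => ⟨hz.1.2, hz.2⟩)
      (hν hW hWc (fun z hz => (hf (y, z) ⟨hyV, hz⟩).comp₂ analyticAt_const analyticAt_id)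
        ⟨b, hb, hyb⟩)
  · convert measure_empty (μ := ν)
    ext z
    simp [hyV]

theorem HasNullAnalyticZeros.prod [SecondCountableTopology E] [SecondCountableTopology F]
    [OpensMeasurableSpace (E × F)] [SFinite ν] (hμ : HasNullAnalyticZeros μ)
    (hν : HasNullAnalyticZeros ν) : HasNullAnalyticZeros (μ.prod ν) := by
  rintro U f hU hUc hf ⟨x₀, hx₀, hfx₀⟩
  refine measure_null_of_locally_null _ fun z hz => ?_
  obtain ⟨r, hr, hball⟩ := Metric.isOpen_iff.1 hU z hz.1
  obtain ⟨⟨a, b⟩, hab, hfab⟩ : ∃ x ∈ ball z r, f x ≠ 0 := by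
    by_contra! h
    exact hfx₀ (hf.eqOn_zero_of_preconnected_of_eventuallyEq_zero hUc hz.1
      (eventually_of_mem (ball_mem_nhds z hr) h) hx₀)
  -- The ball is a product of two connected balls, and `f` is not identically zero on it.
  rw [← ball_prod_same] at hab hball
  refine ⟨{x ∈ ball z.1 r ×ˢ ball z.2 r | f x = 0},
    mem_of_superset (inter_mem_nhdsWithin _ (ball_mem_nhds z hr)) ?_,
    hμ.prod_measure_sep_prod_eq_zero hν isOpen_ball (convex_ball _ _).isPreconnected isOpen_ball
      (convex_ball _ _).isPreconnected (hf.mono hball) hab.1 hab.2 hfab⟩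
  rintro x ⟨⟨-, hfx⟩, hx⟩
  rw [← ball_prod_same] at hx
  exact ⟨hx, hfx⟩

end

theorem MeasureTheory.Measure.pi_fin_succ_eq_map_consEquivL {E : Type*} [NormedAddCommGroup E]
    [NormedSpace ℝ E] [MeasurableSpace E] {m : ℕ} (μ : Fin (m + 1) → Measure E)
    [∀ i, SigmaFinite (μ i)] :
    Measure.pi μ = ((μ 0).prod (Measure.pi fun j => μ j.succ)).map
      (Fin.consEquivL ℝ fun _ => E) := by
  have h := (measurePreserving_piFinSuccAbove μ 0).symm.map_eq
  simp only [Fin.succAbove_zero] at h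
  rw [← h]
  congr 1
  ext x i
  simp [Fin.insertNthEquiv]

theorem HasNullAnalyticZeros.pi {E : Type*} [NormedAddCommGroup E] [NormedSpace ℝ E]
    [MeasurableSpace E] [BorelSpace E] [SecondCountableTopology E] :
    ∀ {m : ℕ} {μ : Fin m → Measure E} [∀ i, SigmaFinite (μ i)],
      (∀ i, HasNullAnalyticZeros (μ i)) → HasNullAnalyticZeros (Measure.pi μ)
  | 0, _, _, _ => by
    rintro U f - - - ⟨x₀, -, hfx₀⟩
    convert measure_empty (μ := Measure.pi _)
    ext x
    simp [Subsingleton.elim x x₀, hfx₀]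
  | m + 1, μ, _, h => by
    rw [Measure.pi_fin_succ_eq_map_consEquivL]
    exact ((h 0).prod (HasNullAnalyticZeros.pi fun j => h j.succ)).map_continuousLinearEquiv _

def evalMatrix {ι α R : Type*} (f : ι → α → R) (x : ι → α) : Matrix ι ι R :=
  Matrix.of fun i j => f j (x i)

theorem det_evalMatrix_cons {α R : Type*} [CommRing R] {p : ℕ} (f : Fin (p + 1) → α → R)
    (y : α) (x : Fin p → α) :
    (evalMatrix f (Fin.cons y x)).det =
      ∑ j : Fin (p + 1),
        ((-1) ^ (j : ℕ) * (evalMatrix (fun k => f (j.succAbove k)) x).det) * f j y := by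
  rw [det_succ_row_zero]
  refine Finset.sum_congr rfl fun j _ => ?_
  simp only [evalMatrix, of_apply, Fin.cons_zero, submatrix, Fin.cons_succ]
  ring

theorem LinearIndependent.exists_det_evalMatrix_ne_zero {α R : Type*} [CommRing R]
    [Nontrivial R] : ∀ {p : ℕ} {f : Fin p → α → R}, LinearIndependent R f →
      ∃ x : Fin p → α, (evalMatrix f x).det ≠ 0
  | 0, _, _ => ⟨finZeroElim, by simp⟩
  | p + 1, f, hf => by
    obtain ⟨x, hx⟩ := (hf.comp Fin.succ (Fin.succ_injective p)).exists_det_evalMatrix_ne_zero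
    set c : Fin (p + 1) → R :=
      fun j => (-1) ^ (j : ℕ) * (evalMatrix (fun k => f (j.succAbove k)) x).det
    have hc : c 0 ≠ 0 := by simpa [c, Function.comp_def] using hx
    -- Expanding along the new first row gives `∑ j, c j * f j y`, and `c 0` is the old minor.
    obtain ⟨y, hy⟩ : ∃ y, ∑ j, c j * f j y ≠ 0 := by
      by_contra! h
      exact hc (Fintype.linearIndependent_iff.1 hf c (funext fun y => by simpa using h y) 0)
    exact ⟨Fin.cons y x, by rwa [det_evalMatrix_cons]⟩

theorem AnalyticAt.matrix_det {𝕜 ι E : Type*} [NontriviallyNormedField 𝕜] [Fintype ι]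
    [DecidableEq ι] [NormedAddCommGroup E] [NormedSpace 𝕜 E] {A : E → Matrix ι ι 𝕜} {x : E}
    (hA : ∀ i j, AnalyticAt 𝕜 (fun y => A y i j) x) : AnalyticAt 𝕜 (fun y => (A y).det) x := by
  simp_rw [det_apply']
  fun_prop

theorem AnalyticOnNhd.det_evalMatrix {𝕜 ι E : Type*} [NontriviallyNormedField 𝕜] [Fintype ι]
    [DecidableEq ι] [NormedAddCommGroup E] [NormedSpace 𝕜 E] {Ω : Set E} {f : ι → E → 𝕜}
    (hf : ∀ j, AnalyticOnNhd 𝕜 (f j) Ω) :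
    AnalyticOnNhd 𝕜 (fun x => (evalMatrix f x).det) (univ.pi fun _ => Ω) := fun x hx =>
  AnalyticAt.matrix_det fun i j => (hf j (x i) (hx i trivial)).comp (f := fun y : ι → E => y i)
    ((ContinuousLinearMap.proj (R := 𝕜) (φ := fun _ : ι => E) i).analyticAt x)

theorem stmt_4_general {d p : ℕ} (Ω : Set (Fin d → ℝ)) (hop : IsOpen Ω)
    (hconn : IsConnected Ω)
    (f : Fin p → (Fin d → ℝ) → ℝ)
    (hana : ∀ j, AnalyticOnNhd ℝ (f j) Ω)
    (hind : LinearIndependent ℝ fun j => Ω.restrict (f j))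
    {Ω' : Type*} [MeasurableSpace Ω'] (P : Measure Ω') [IsProbabilityMeasure P]
    (Xs : Fin p → Ω' → (Fin d → ℝ)) (hmeas : ∀ i, Measurable (Xs i))
    (hindep : iIndepFun Xs P)
    (hlaw : ∀ i, P.map (Xs i) = (volume Ω)⁻¹ • volume.restrict Ω) :
    P {ω | (Matrix.of fun i j => f j (Xs i ω)).det ≠ 0} = 1 := by
  have : ∀ i, IsProbabilityMeasure (P.map (Xs i)) :=
    fun i => Measure.isProbabilityMeasure_map (hmeas i).aemeasurable
  have hlaw_ac : ∀ i, P.map (Xs i) ≪ volume := fun i => by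
    rw [hlaw]; exact Measure.absolutelyContinuous_restrict.smul_left _
  have hlaw_mem : ∀ i, ∀ᵐ y ∂P.map (Xs i), y ∈ Ω := fun i => by
    rw [hlaw]; exact Measure.ae_smul_measure (ae_restrict_mem hop.measurableSet) _
  have hvolume : HasNullAnalyticZeros (volume : Measure (Fin d → ℝ)) :=
    volume_pi (α := fun _ : Fin d => ℝ) ▸ .pi fun _ => hasNullAnalyticZeros_real volume
  obtain ⟨x, hx⟩ := hind.exists_det_evalMatrix_ne_zero
  have hzero := HasNullAnalyticZeros.pi (fun i => hvolume.of_absolutelyContinuous (hlaw_ac i))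
    (isOpen_set_pi finite_univ fun _ _ => hop)
    (isPreconnected_univ_pi fun _ => hconn.isPreconnected) (AnalyticOnNhd.det_evalMatrix hana)
    ⟨fun i => x i, fun i _ => (x i).2, hx⟩
  have hae : ∀ᵐ y ∂Measure.pi fun i => P.map (Xs i), (evalMatrix f y).det ≠ 0 := by
    filter_upwards [measure_eq_zero_iff_ae_notMem.1 hzero,
      ae_all_iff.2 fun i => Measure.tendsto_eval_ae_ae.eventually (hlaw_mem i)] with y hy hyΩ
    exact fun h0 => hy ⟨fun i _ => hyΩ i, h0⟩
  rw [← hindep.map_fun_eq_pi_map fun i => (hmeas i).aemeasurable] at hae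
  exact (measure_congr (ae_eq_univ.2 (ae_of_ae_map (by fun_prop) hae))).trans measure_univ

/-- if `f₁, …, f_p` are real analytic on a nonempty open connected set
`Ω ⊆ ℝ^d` of finite positive Lebesgue measure and linearly independent as functions on
`Ω`, and `X₁, …, X_p` are i.i.d. with the normalized Lebesgue distribution on `Ω`, then
the sampling matrix `M_{ij} = f_j(X_i)` is almost surely invertible. -/
theorem stmt_4 {d p : ℕ} (Ω : Set (Fin d → ℝ)) (hne : Ω.Nonempty) (hop : IsOpen Ω)
    (hconn : IsConnected Ω) (hpos : 0 < volume Ω) (hfin : volume Ω < ⊤)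
    (f : Fin p → (Fin d → ℝ) → ℝ)
    (hana : ∀ j, AnalyticOnNhd ℝ (f j) Ω)
    (hind : LinearIndependent ℝ fun j => Ω.restrict (f j))
    {Ω' : Type*} [MeasurableSpace Ω'] (P : Measure Ω') [IsProbabilityMeasure P]
    (Xs : Fin p → Ω' → (Fin d → ℝ)) (hmeas : ∀ i, Measurable (Xs i))
    (hindep : iIndepFun Xs P)
    (hlaw : ∀ i, P.map (Xs i) = (volume Ω)⁻¹ • volume.restrict Ω) :
    P {ω | (Matrix.of fun i j => f j (Xs i ω)).det ≠ 0} = 1 :=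
  stmt_4_general Ω hop hconn f hana hind P Xs hmeas hindep hlaw
end

section
/- Fix ε > 0 and define π_ε : ℝ^{n×p} → Sym(n) by π_ε(X) = X (XᵀX + ε I_p)⁻¹ Xᵀ. Then π_ε is Fréchet differentiable at every X ∈ ℝ^{n×p}, and its derivative in the direction Δ ∈ ℝ^{n×p} is Dπ_ε(X)[Δ] = (I_n − P) Δ K Xᵀ + ((I_n − P) Δ K Xᵀ)ᵀ, where K = (XᵀX + ε I_p)⁻¹ and P = π_ε(X). -/
/-!
Write `K(X) = (XᵀX + εI)⁻¹`, so that `π_ε(X) = X K(X) Xᵀ`. For `ε > 0` the Gram matrix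
`XᵀX + εI` is positive definite, hence invertible, so `K` is differentiable with
`DK(X)[Δ] = -K (XᵀΔ + ΔᵀX) K`, and the product rule gives
`Dπ_ε(X)[Δ] = Δ K Xᵀ - X K (XᵀΔ + ΔᵀX) K Xᵀ + X K Δᵀ`.
Since `K` is symmetric, `Δ K Xᵀ - X K Xᵀ Δ K Xᵀ = (I - P) Δ K Xᵀ` and the two remaining terms
form its transpose.
-/

open Matrix

attribute [local instance] Matrix.frobeniusNormedAddCommGroup Matrix.frobeniusNormedSpace

noncomputable def piEps {n p : ℕ} (ε : ℝ) (X : Matrix (Fin n) (Fin p) ℝ) :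
    Matrix (Fin n) (Fin n) ℝ :=
  X * (Xᵀ * X + ε • (1 : Matrix (Fin p) (Fin p) ℝ))⁻¹ * Xᵀ

namespace Matrix

variable {𝕜 : Type*} [RCLike 𝕜] {l m o : Type*} [Fintype l] [Fintype m] [Fintype o]

noncomputable def mulCLM : Matrix l m 𝕜 →L[𝕜] Matrix m o 𝕜 →L[𝕜] Matrix l o 𝕜 :=
  (mulLinearMap 𝕜).toContinuousBilinearMap

noncomputable def transposeCLM : Matrix l m 𝕜 →L[𝕜] Matrix m l 𝕜 :=
  LinearMap.toContinuousLinearMap (transposeLinearEquiv l m 𝕜 𝕜).toLinearMap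

theorem hasFDerivAt_transpose (A : Matrix l m 𝕜) :
    HasFDerivAt transpose (transposeCLM : Matrix l m 𝕜 →L[𝕜] Matrix m l 𝕜) A :=
  (transposeCLM : Matrix l m 𝕜 →L[𝕜] Matrix m l 𝕜).hasFDerivAt

end Matrix

section MatrixCalculus

variable {𝕜 : Type*} [RCLike 𝕜] {E : Type*} [NormedAddCommGroup E] [NormedSpace 𝕜 E]
  {l m o : Type*} [Fintype l] [Fintype m] [Fintype o]

theorem HasFDerivAt.matrix_mul {f : E → Matrix l m 𝕜} {g : E → Matrix m o 𝕜}
    {f' : E →L[𝕜] Matrix l m 𝕜} {g' : E →L[𝕜] Matrix m o 𝕜} {x : E}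
    (hf : HasFDerivAt f f' x) (hg : HasFDerivAt g g' x) :
    HasFDerivAt (fun y => f y * g y) (mulCLM.precompR E (f x) g' + mulCLM.precompL E f' (g x)) x :=
  mulCLM.hasFDerivAt_of_bilinear hf hg

theorem HasFDerivAt.matrix_inv [DecidableEq m] {f : E → Matrix m m 𝕜}
    {f' : E →L[𝕜] Matrix m m 𝕜} {x : E} (hf : HasFDerivAt f f' x) (hx : IsUnit (f x)) :
    HasFDerivAt (fun y => (f y)⁻¹)
      (-mulCLM.precompL E (mulCLM.precompR E (f x)⁻¹ f') (f x)⁻¹) x := by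
  -- the Frobenius algebra norm extends the Frobenius norm in use,
  -- so `hasFDerivAt_ringInverse` applies
  let _ : NormedRing (Matrix m m 𝕜) := frobeniusNormedRing
  let _ : NormedAlgebra 𝕜 (Matrix m m 𝕜) := frobeniusNormedAlgebra
  have hinv := hasFDerivAt_ringInverse (𝕜 := 𝕜) hx.unit
  rw [coe_units_inv, hx.unit_spec] at hinv
  have hfun : (fun y => (f y)⁻¹) = Ring.inverse ∘ f :=
    funext fun y => nonsing_inv_eq_ringInverse (f y)
  rw [hfun]
  refine (hinv.comp x hf).congr_fderiv ?_
  ext v : 1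
  rfl

end MatrixCalculus

namespace Matrix

variable {m n : Type*} [Fintype m] [Fintype n] [DecidableEq n]

theorem posDef_transpose_mul_self_add_smul_one {ε : ℝ} (hε : 0 < ε) (X : Matrix m n ℝ) :
    (Xᵀ * X + ε • (1 : Matrix n n ℝ)).PosDef := by
  have hXX : (Xᵀ * X).PosSemidef := by simpa using posSemidef_conjTranspose_mul_self X
  exact PosDef.posSemidef_add hXX (PosDef.one.smul hε)

theorem isSymm_inv_transpose_mul_self_add_smul_one (ε : ℝ) (X : Matrix m n ℝ) :
    (Xᵀ * X + ε • (1 : Matrix n n ℝ))⁻¹.IsSymm := by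
  have hXX : (Xᵀ * X).IsSymm := by simp [IsSymm, transpose_mul]
  exact (hXX.add (isSymm_one.smul ε)).inv

end Matrix

section RegularizedProjection

variable {n p : ℕ}

theorem isSymm_piEps (ε : ℝ) (X : Matrix (Fin n) (Fin p) ℝ) : (piEps ε X).IsSymm := by
  simp [IsSymm, piEps, transpose_mul, (isSymm_inv_transpose_mul_self_add_smul_one ε X).eq,
    Matrix.mul_assoc]

theorem hasFDerivAt_piEps {ε : ℝ} (hε : 0 < ε) (X : Matrix (Fin n) (Fin p) ℝ) :
    ∃ D : Matrix (Fin n) (Fin p) ℝ →L[ℝ] Matrix (Fin n) (Fin n) ℝ, HasFDerivAt (piEps ε) D X ∧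
      ∀ Δ, D Δ =
        (1 - piEps ε X) * Δ * (Xᵀ * X + ε • (1 : Matrix (Fin p) (Fin p) ℝ))⁻¹ * Xᵀ +
          ((1 - piEps ε X) * Δ * (Xᵀ * X + ε • (1 : Matrix (Fin p) (Fin p) ℝ))⁻¹ * Xᵀ)ᵀ := by
  have hGram : HasFDerivAt (fun Y : Matrix (Fin n) (Fin p) ℝ => Yᵀ * Y + ε • 1) _ X :=
    ((hasFDerivAt_transpose X).matrix_mul (hasFDerivAt_id X)).add_const _
  have hK := hGram.matrix_inv (posDef_transpose_mul_self_add_smul_one hε X).isUnit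
  refine ⟨_, ((hasFDerivAt_id X).matrix_mul hK).matrix_mul (hasFDerivAt_transpose X), fun Δ => ?_⟩
  have hKsymm := (isSymm_inv_transpose_mul_self_add_smul_one ε X).eq
  set K := (Xᵀ * X + ε • (1 : Matrix (Fin p) (Fin p) ℝ))⁻¹
  change X * K * Δᵀ + (X * -(K * (Xᵀ * Δ + Δᵀ * X) * K) + Δ * K) * Xᵀ = _
  rw [show piEps ε X = X * K * Xᵀ from rfl]
  simp only [transpose_mul, transpose_sub, transpose_transpose, hKsymm, Matrix.sub_mul,
    Matrix.add_mul, Matrix.mul_add, Matrix.neg_mul, Matrix.mul_neg, Matrix.one_mul,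
    Matrix.mul_assoc]
  abel

end RegularizedProjection

/-- for `ε > 0`, `π_ε` maps into symmetric matrices, is Fréchet differentiable
at every `X`, and its derivative in direction `Δ` is
`(I − P) Δ K Xᵀ + ((I − P) Δ K Xᵀ)ᵀ` with `K = (XᵀX + εI)⁻¹` and `P = π_ε(X)`. -/
theorem stmt_8 {n p : ℕ} (ε : ℝ) (hε : 0 < ε) (X : Matrix (Fin n) (Fin p) ℝ) :
    (piEps ε X)ᵀ = piEps ε X ∧
    DifferentiableAt ℝ (piEps ε) X ∧
    ∀ Δ : Matrix (Fin n) (Fin p) ℝ,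
      fderiv ℝ (piEps ε) X Δ =
        (1 - piEps ε X) * Δ * (Xᵀ * X + ε • (1 : Matrix (Fin p) (Fin p) ℝ))⁻¹ * Xᵀ +
          ((1 - piEps ε X) * Δ * (Xᵀ * X + ε • (1 : Matrix (Fin p) (Fin p) ℝ))⁻¹ * Xᵀ)ᵀ := by
  obtain ⟨D, hD, hD_apply⟩ := hasFDerivAt_piEps hε X
  exact ⟨isSymm_piEps ε X, hD.differentiableAt, fun Δ => by rw [hD.fderiv, hD_apply]⟩
end

section
/- Let X ∈ ℝ^{n×p} with XᵀX = I_p, let U ∈ ℝ^{n×p} with UᵀU = I_p and XᵀU = 0, let V ∈ O(p), and let Σ = diag(σ₁,…,σ_p) with σ_i ≥ 0, so that H = UΣVᵀ is a horizontal vector at X (XᵀH = 0). Define Y(t) = X V cos(tΣ) Vᵀ + U sin(tΣ) Vᵀ. Then for all t ∈ ℝ: (i) Y(t)ᵀY(t) = I_p; (ii) Y(t)ᵀ Ẏ(t) = 0, i.e. the velocity is horizontal; (iii) Ÿ(t) = −Y(t) V Σ² Vᵀ, so the Euclidean acceleration lies in the normal space {Y S : S symmetric} to the Stiefel manifold at Y(t);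 and (iv) Y(0) = X and Ẏ(0) = H. Hence Y is the horizontal geodesic in St(n,p) through X with initial velocity H, and span(Y(t)) is the geodesic on the Grassmannian. -/
/-!
Write `Y(t) = X V C Vᵀ + U S Vᵀ` with `C = cos(tΣ)`, `S = sin(tΣ)`. Since `[X U]` has
orthonormal columns and `V` is orthogonal, every product `(XVCVᵀ + USVᵀ)ᵀ (XVC'Vᵀ + US'Vᵀ)`
collapses to `V (CC' + SS') Vᵀ`, and differentiation acts entrywise on the diagonal factors.
So orthonormality, horizontality and the acceleration formula reduce to the scalar identities
`cos² + sin² = 1`, `cos' = -sin`, `sin' = cos`.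
-/

open Matrix

attribute [local instance] Matrix.frobeniusNormedAddCommGroup Matrix.frobeniusNormedSpace

section Algebra

variable {R m p : Type*} [CommRing R] [Fintype m] [Fintype p] [DecidableEq p]

theorem Matrix.mul_mul_of_mul_eq_one {q : Type*} {A : Matrix p m R} {B : Matrix m p R}
    (h : A * B = 1) (M : Matrix p q R) : A * (B * M) = M := by
  rw [← Matrix.mul_assoc, h, Matrix.one_mul]

omit [DecidableEq p] in
theorem Matrix.mul_mul_of_mul_eq_zero {q : Type*} {A : Matrix p m R} {B : Matrix m p R}
    (h : A * B = 0) (M : Matrix p q R) : A * (B * M) = 0 := by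
  rw [← Matrix.mul_assoc, h, Matrix.zero_mul]

variable {X U : Matrix m p R} {V : Matrix p p R}

theorem frame_transpose_mul_frame (hX : Xᵀ * X = 1) (hU : Uᵀ * U = 1) (hXU : Xᵀ * U = 0)
    (hV : Vᵀ * V = 1) (c s c' s' : p → R) :
    (X * V * diagonal c * Vᵀ + U * diagonal s * Vᵀ)ᵀ *
        (X * V * diagonal c' * Vᵀ + U * diagonal s' * Vᵀ) =
      V * diagonal (fun i => c i * c' i + s i * s' i) * Vᵀ := by
  have hUX : Uᵀ * X = 0 := by simpa using congrArg transpose hXU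
  simp only [transpose_add, transpose_mul, diagonal_transpose, transpose_transpose,
    Matrix.add_mul, Matrix.mul_add, Matrix.mul_assoc, mul_mul_of_mul_eq_one hX,
    mul_mul_of_mul_eq_one hU, mul_mul_of_mul_eq_one hV, mul_mul_of_mul_eq_zero hXU,
    mul_mul_of_mul_eq_zero hUX, Matrix.mul_zero, add_zero, zero_add]
  rw [← Matrix.mul_assoc (diagonal c), ← Matrix.mul_assoc (diagonal s), diagonal_mul_diagonal,
    diagonal_mul_diagonal, ← Matrix.mul_add, ← Matrix.add_mul, diagonal_add]

omit [Fintype m] in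
theorem neg_frame_mul_conj_diagonal (hV : Vᵀ * V = 1) (c s w : p → R) :
    -((X * V * diagonal c * Vᵀ + U * diagonal s * Vᵀ) * (V * diagonal w * Vᵀ)) =
      X * V * diagonal (fun i => -(c i * w i)) * Vᵀ +
        U * diagonal (fun i => -(s i * w i)) * Vᵀ := by
  simp only [Matrix.add_mul, Matrix.mul_assoc, mul_mul_of_mul_eq_one hV]
  simp only [← Matrix.mul_assoc, diagonal_mul_diagonal, ← diagonal_neg, Matrix.mul_neg,
    Matrix.neg_mul, neg_add]

end Algebra

theorem hasDerivAt_mul_diagonal_mul {m k l : Type*} [Fintype m] [Fintype k] [Fintype l]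
    [DecidableEq k] (A : Matrix m k ℝ) (B : Matrix k l ℝ) {f : ℝ → k → ℝ} {f' : k → ℝ} {t : ℝ}
    (hf : ∀ i, HasDerivAt (fun s => f s i) (f' i) t) :
    HasDerivAt (fun s => A * diagonal (f s) * B) (A * diagonal f' * B) t :=
  let L := mulRightLinearMap m ℝ B ∘ₗ mulLeftLinearMap k ℝ A ∘ₗ diagonalLinearMap k ℝ ℝ
  L.toContinuousLinearMap.hasFDerivAt.comp_hasDerivAt t (hasDerivAt_pi.2 hf)

theorem stmt_15_general {n p : ℕ} (X U : Matrix (Fin n) (Fin p) ℝ) (V : Matrix (Fin p) (Fin p) ℝ)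
    (σ : Fin p → ℝ) (hX : Xᵀ * X = 1) (hU : Uᵀ * U = 1) (hXU : Xᵀ * U = 0)
    (hV : Vᵀ * V = 1) :
    Xᵀ * (U * diagonal σ * Vᵀ) = 0 ∧
    (∀ t : ℝ,
      HasDerivAt
        (fun s : ℝ => X * V * diagonal (fun i => Real.cos (s * σ i)) * Vᵀ +
          U * diagonal (fun i => Real.sin (s * σ i)) * Vᵀ)
        (X * V * diagonal (fun i => -(σ i) * Real.sin (t * σ i)) * Vᵀ +
          U * diagonal (fun i => σ i * Real.cos (t * σ i)) * Vᵀ) t) ∧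
    (∀ t : ℝ,
      (X * V * diagonal (fun i => Real.cos (t * σ i)) * Vᵀ +
          U * diagonal (fun i => Real.sin (t * σ i)) * Vᵀ)ᵀ *
        (X * V * diagonal (fun i => Real.cos (t * σ i)) * Vᵀ +
          U * diagonal (fun i => Real.sin (t * σ i)) * Vᵀ) = 1) ∧
    (∀ t : ℝ,
      (X * V * diagonal (fun i => Real.cos (t * σ i)) * Vᵀ +
          U * diagonal (fun i => Real.sin (t * σ i)) * Vᵀ)ᵀ *
        (X * V * diagonal (fun i => -(σ i) * Real.sin (t * σ i)) * Vᵀ +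
          U * diagonal (fun i => σ i * Real.cos (t * σ i)) * Vᵀ) = 0) ∧
    (∀ t : ℝ,
      HasDerivAt
        (fun s : ℝ => X * V * diagonal (fun i => -(σ i) * Real.sin (s * σ i)) * Vᵀ +
          U * diagonal (fun i => σ i * Real.cos (s * σ i)) * Vᵀ)
        (-((X * V * diagonal (fun i => Real.cos (t * σ i)) * Vᵀ +
            U * diagonal (fun i => Real.sin (t * σ i)) * Vᵀ) *
          (V * diagonal (fun i => σ i ^ 2) * Vᵀ))) t) ∧
    (∀ t : ℝ, ∃ S : Matrix (Fin p) (Fin p) ℝ, Sᵀ = S ∧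
      -((X * V * diagonal (fun i => Real.cos (t * σ i)) * Vᵀ +
          U * diagonal (fun i => Real.sin (t * σ i)) * Vᵀ) *
        (V * diagonal (fun i => σ i ^ 2) * Vᵀ)) =
      (X * V * diagonal (fun i => Real.cos (t * σ i)) * Vᵀ +
          U * diagonal (fun i => Real.sin (t * σ i)) * Vᵀ) * S) ∧
    (X * V * diagonal (fun i => Real.cos ((0 : ℝ) * σ i)) * Vᵀ +
        U * diagonal (fun i => Real.sin ((0 : ℝ) * σ i)) * Vᵀ = X) ∧
    (X * V * diagonal (fun i => -(σ i) * Real.sin ((0 : ℝ) * σ i)) * Vᵀ +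
        U * diagonal (fun i => σ i * Real.cos ((0 : ℝ) * σ i)) * Vᵀ =
      U * diagonal σ * Vᵀ) := by
  have hVVt : V * Vᵀ = 1 := mul_eq_one_comm.mp hV
  have hcos (t : ℝ) (i : Fin p) :
      HasDerivAt (fun s => Real.cos (s * σ i)) (-(σ i) * Real.sin (t * σ i)) t :=
    (hasDerivAt_mul_const (σ i)).cos.congr_deriv (by ring)
  have hsin (t : ℝ) (i : Fin p) :
      HasDerivAt (fun s => Real.sin (s * σ i)) (σ i * Real.cos (t * σ i)) t :=
    (hasDerivAt_mul_const (σ i)).sin.congr_deriv (by ring)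
  refine ⟨by rw [Matrix.mul_assoc U, mul_mul_of_mul_eq_zero hXU],
    fun t => (hasDerivAt_mul_diagonal_mul _ _ (hcos t)).add
      (hasDerivAt_mul_diagonal_mul _ _ (hsin t)),
    fun t => ?_, fun t => ?_, fun t => ?_, fun t => ⟨_, ?_, (Matrix.mul_neg _ _).symm⟩, ?_, ?_⟩
  · rw [frame_transpose_mul_frame hX hU hXU hV]
    simp only [← sq, Real.cos_sq_add_sin_sq, diagonal_one, Matrix.mul_one, hVVt]
  · rw [frame_transpose_mul_frame hX hU hXU hV]
    simp only [show ∀ i, Real.cos (t * σ i) * (-σ i * Real.sin (t * σ i)) +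
      Real.sin (t * σ i) * (σ i * Real.cos (t * σ i)) = 0 from fun i => by ring, diagonal_zero,
      Matrix.mul_zero, Matrix.zero_mul]
  · rw [neg_frame_mul_conj_diagonal hV]
    refine (hasDerivAt_mul_diagonal_mul _ _ fun i => ?_).add
      (hasDerivAt_mul_diagonal_mul _ _ fun i => ?_)
    · exact ((hsin t i).const_mul _).congr_deriv (by ring)
    · exact ((hcos t i).const_mul _).congr_deriv (by ring)
  · simp only [transpose_neg, transpose_mul, diagonal_transpose, transpose_transpose,
      Matrix.mul_assoc]
  · simp [hVVt, Matrix.mul_assoc]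
  · simp

/-- the curve `Y(t) = XV cos(tΣ)Vᵀ + U sin(tΣ)Vᵀ` is the horizontal geodesic
of the Stiefel manifold through `X` with initial velocity `H = UΣVᵀ`: it stays on the
Stiefel manifold, has horizontal velocity, its Euclidean acceleration `−Y(t)VΣ²Vᵀ` lies in
the normal space `{YS : S symmetric}`, and `Y(0) = X`, `Ẏ(0) = H`. -/
theorem stmt_15 {n p : ℕ} (X U : Matrix (Fin n) (Fin p) ℝ) (V : Matrix (Fin p) (Fin p) ℝ)
    (σ : Fin p → ℝ) (hX : Xᵀ * X = 1) (hU : Uᵀ * U = 1) (hXU : Xᵀ * U = 0)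
    (hV : Vᵀ * V = 1) (hσ : ∀ i, 0 ≤ σ i) :
    Xᵀ * (U * diagonal σ * Vᵀ) = 0 ∧
    (∀ t : ℝ,
      HasDerivAt
        (fun s : ℝ => X * V * diagonal (fun i => Real.cos (s * σ i)) * Vᵀ +
          U * diagonal (fun i => Real.sin (s * σ i)) * Vᵀ)
        (X * V * diagonal (fun i => -(σ i) * Real.sin (t * σ i)) * Vᵀ +
          U * diagonal (fun i => σ i * Real.cos (t * σ i)) * Vᵀ) t) ∧
    (∀ t : ℝ,
      (X * V * diagonal (fun i => Real.cos (t * σ i)) * Vᵀ +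
          U * diagonal (fun i => Real.sin (t * σ i)) * Vᵀ)ᵀ *
        (X * V * diagonal (fun i => Real.cos (t * σ i)) * Vᵀ +
          U * diagonal (fun i => Real.sin (t * σ i)) * Vᵀ) = 1) ∧
    (∀ t : ℝ,
      (X * V * diagonal (fun i => Real.cos (t * σ i)) * Vᵀ +
          U * diagonal (fun i => Real.sin (t * σ i)) * Vᵀ)ᵀ *
        (X * V * diagonal (fun i => -(σ i) * Real.sin (t * σ i)) * Vᵀ +
          U * diagonal (fun i => σ i * Real.cos (t * σ i)) * Vᵀ) = 0) ∧
    (∀ t : ℝ,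
      HasDerivAt
        (fun s : ℝ => X * V * diagonal (fun i => -(σ i) * Real.sin (s * σ i)) * Vᵀ +
          U * diagonal (fun i => σ i * Real.cos (s * σ i)) * Vᵀ)
        (-((X * V * diagonal (fun i => Real.cos (t * σ i)) * Vᵀ +
            U * diagonal (fun i => Real.sin (t * σ i)) * Vᵀ) *
          (V * diagonal (fun i => σ i ^ 2) * Vᵀ))) t) ∧
    (∀ t : ℝ, ∃ S : Matrix (Fin p) (Fin p) ℝ, Sᵀ = S ∧
      -((X * V * diagonal (fun i => Real.cos (t * σ i)) * Vᵀ +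
          U * diagonal (fun i => Real.sin (t * σ i)) * Vᵀ) *
        (V * diagonal (fun i => σ i ^ 2) * Vᵀ)) =
      (X * V * diagonal (fun i => Real.cos (t * σ i)) * Vᵀ +
          U * diagonal (fun i => Real.sin (t * σ i)) * Vᵀ) * S) ∧
    (X * V * diagonal (fun i => Real.cos ((0 : ℝ) * σ i)) * Vᵀ +
        U * diagonal (fun i => Real.sin ((0 : ℝ) * σ i)) * Vᵀ = X) ∧
    (X * V * diagonal (fun i => -(σ i) * Real.sin ((0 : ℝ) * σ i)) * Vᵀ +
        U * diagonal (fun i => σ i * Real.cos ((0 : ℝ) * σ i)) * Vᵀ =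
      U * diagonal σ * Vᵀ) :=
  stmt_15_general X U V σ hX hU hXU hV
end
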